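/- arXiv:2408.08022 — 8 statements merged into one kernel-verified Lean document; each statement's English description precedes it below -/
import Mathlib

section
/- Let n be an integer with n ≥ 5, let K̄ > 0 be a real number, and let x ≥ 0. Then å(x) > 0 and 4x·(å′(x))² < å(x), where å(x) = a(x) − x/n, a(x) = sqrt((x/(n−2) + 4K̄)² + (4n−16)K̄²), and å′(x) = (x/(n−2) + 4K̄)/((n−2)·a(x)) − 1/n. (Equivalently, 4x(å′)²/å < 1.) -/
set_option maxHeartbeats 800000


/-- For `n ≥ 5`, `K̄ > 0` and `x ≥ 0`, one has `å(x) > 0` and `4x·(å′(x))² < å(x)`,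
where `å(x) = a(x) − x/n` and `å′(x) = (x/(n−2) + 4K̄)/((n−2)·a(x)) − 1/n`. -/
theorem stmt_4 (n : ℕ) (hn : 5 ≤ n) (K x : ℝ) (hK : 0 < K) (hx : 0 ≤ x) :
    0 < Real.sqrt ((x / ((n : ℝ) - 2) + 4 * K) ^ 2 + (4 * (n : ℝ) - 16) * K ^ 2) - x / n ∧
    4 * x *
        ((x / ((n : ℝ) - 2) + 4 * K) /
            (((n : ℝ) - 2) *
              Real.sqrt ((x / ((n : ℝ) - 2) + 4 * K) ^ 2 + (4 * (n : ℝ) - 16) * K ^ 2))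
          - 1 / n) ^ 2
      < Real.sqrt ((x / ((n : ℝ) - 2) + 4 * K) ^ 2 + (4 * (n : ℝ) - 16) * K ^ 2) - x / n := by
  have hN5 : (5 : ℝ) ≤ (n : ℝ) := by exact_mod_cast hn
  set N : ℝ := (n : ℝ) with hNdef
  clear_value N
  set m : ℝ := N - 2 with hmdef
  clear_value m
  have hm3 : (3 : ℝ) ≤ m := by rw [hmdef]; linarith
  have hm0 : 0 < m := by linarith
  have hN0 : 0 < N := by linarith
  set u : ℝ := x / m + 4 * K with hudef
  clear_value u
  have hxm : 0 ≤ x / m := div_nonneg hx hm0.le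
  have hu0 : 0 < u := by rw [hudef]; linarith
  set S : ℝ := u ^ 2 + (4 * N - 16) * K ^ 2 with hSdef
  have hc : (0:ℝ) ≤ (4 * N - 16) * K ^ 2 :=
    mul_nonneg (by linarith) (sq_nonneg K)
  clear_value S
  have hSpos : 0 < S := by rw [hSdef]; nlinarith
  set a : ℝ := Real.sqrt S with hadef
  have ha2 : a ^ 2 = S := by rw [hadef]; exact Real.sq_sqrt hSpos.le
  have hau : u ≤ a := by
    rw [hadef]
    refine Real.le_sqrt' hu0 |>.mpr ?_
    rw [hSdef]; nlinarith
  clear_value a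
  have ha0 : 0 < a := lt_of_lt_of_le hu0 hau
  have hxN : x / N ≤ x / m := div_le_div_of_nonneg_left hx hm0 (by linarith)
  have hxu : x = m * u - 4 * m * K := by
    rw [hudef]; field_simp; ring
  have hua : x / N + 4 * K ≤ a := by
    have h1 : x / N + 4 * K ≤ u := by rw [hudef]; linarith
    linarith
  refine ⟨by linarith, ?_⟩
  set D : ℝ := u / (m * a) - 1 / N with hDdef
  clear_value D
  have hma : 0 < m * a := mul_pos hm0 ha0
  have hpos : 0 < u / (m * a) := div_pos hu0 hma
  have hDlb : -(1 / N) < D := by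
    have h1 : 0 < 1 / N := by positivity
    rw [hDdef]; linarith
  rcases le_or_gt 0 D with hD | hD
  · -- nonnegative derivative case : D ≤ 2/(m*N)
    have h1 : u / (m * a) ≤ a / (m * a) := div_le_div_of_nonneg_right hau hma.le
    have h2 : a / (m * a) = 1 / m := by field_simp
    have h3 : 1 / m - 1 / N = 2 / (m * N) := by
      rw [div_sub_div _ _ hm0.ne' hN0.ne']
      congr 1
      rw [hmdef]; ring
    have hDub : D ≤ 2 / (m * N) := by rw [hDdef]; linarith [h1, h2.le, h3.le]
    set q : ℝ := 1 / (m * N) with hqdef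
    have hq0 : 0 < q := by rw [hqdef]; positivity
    clear_value q
    have hq15 : q ≤ 1 / 15 := by
      rw [hqdef]
      apply div_le_div_of_nonneg_left (by norm_num) (by norm_num)
      nlinarith
    have hdiff : x / m - x / N = 2 * x * q := by
      rw [hqdef, div_sub_div _ _ hm0.ne' hN0.ne', mul_one_div]
      congr 1
      rw [hmdef]; ring
    have hRHS : 2 * x * q + 4 * K ≤ a - x / N := by
      have h4 : u - x / N = x / m - x / N + 4 * K := by rw [hudef]; ring
      linarith [hau, hdiff]
    have h2q : D ≤ 2 * q := by
      have h5 : 2 * q = 2 / (m * N) := by rw [hqdef]; ring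
      linarith
    have hD2 : D ^ 2 ≤ (2 * q) ^ 2 := pow_le_pow_left₀ hD h2q 2
    have hLHS : 4 * x * D ^ 2 ≤ 4 * x * (2 * q) ^ 2 :=
      mul_le_mul_of_nonneg_left hD2 (by positivity)
    have h6 : 4 * x * (2 * q) ^ 2 ≤ 2 * x * q := by
      have hxq : 0 ≤ x * q * (1 - 8 * q) :=
        mul_nonneg (mul_nonneg hx hq0.le) (by linarith)
      linarith [hxq]
    linarith
  · -- negative derivative case
    have hD' : u / (m * a) < 1 / N := by
      rw [hDdef] at hD; linarith
    have hNu : u * N < m * a := by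
      have := (div_lt_div_iff₀ hma hN0).mp hD'
      linarith
    have hsq : u ^ 2 * N ^ 2 < m ^ 2 * u ^ 2 + m ^ 2 * ((4 * N - 16) * K ^ 2) := by
      have h0 : (u * N) ^ 2 < (m * a) ^ 2 := by
        have h1 : 0 ≤ u * N := by positivity
        exact pow_lt_pow_left₀ hNu h1 (by norm_num)
      have h2 : (m * a) ^ 2 = m ^ 2 * S := by rw [mul_pow, ha2]
      rw [h2, hSdef] at h0
      linarith [h0]
    have hc0 : (0:ℝ) < 4 * N - 16 := by linarith
    have e1 : (N ^ 2 - m ^ 2) * u ^ 2 = u ^ 2 * N ^ 2 - m ^ 2 * u ^ 2 := by ring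
    have e2 : N ^ 2 - m ^ 2 = 4 * N - 4 := by rw [hmdef]; ring
    have h3 : (4 * N - 16) * u ^ 2 ≤ (4 * N - 4) * u ^ 2 :=
      mul_le_mul_of_nonneg_right (by linarith) (sq_nonneg u)
    have h4 : (4 * N - 4) * u ^ 2 < m ^ 2 * ((4 * N - 16) * K ^ 2) := by
      rw [← e2]; linarith [hsq, e1]
    have h2u : u ^ 2 < m ^ 2 * K ^ 2 := by
      have h5 : (4 * N - 16) * u ^ 2 < (4 * N - 16) * (m ^ 2 * K ^ 2) := by
        calc (4 * N - 16) * u ^ 2 ≤ (4 * N - 4) * u ^ 2 := h3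
          _ < m ^ 2 * ((4 * N - 16) * K ^ 2) := h4
          _ = (4 * N - 16) * (m ^ 2 * K ^ 2) := by ring
      exact (mul_lt_mul_iff_right₀ hc0).mp h5
    have humK : u < m * K := by
      have h6 : u ^ 2 < (m * K) ^ 2 := by
        calc u ^ 2 < m ^ 2 * K ^ 2 := h2u
          _ = (m * K) ^ 2 := by ring
      exact lt_of_pow_lt_pow_left₀ 2 (by positivity) h6
    have hxlt : x < N ^ 2 * K := by
      have h7 : m * u < m * (m * K) := mul_lt_mul_of_pos_left humK hm0
      have h8 : m * (m * K) - 4 * m * K < N ^ 2 * K := by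
        have e4 : m * (m * K) - 4 * m * K = N ^ 2 * K - (8 * N - 12) * K := by
          rw [hmdef]; ring
        have e5 : 0 < (8 * N - 12) * K :=
          mul_pos (by linarith) hK
        linarith [e4.le, e4.ge, e5]
      linarith [hxu, h7, h8]
    have hD2 : D ^ 2 < (1 / N) ^ 2 := by
      have ha1 : (0:ℝ) < 1 / N + D := by linarith
      have ha2' : (0:ℝ) < 1 / N - D := by
        have : (0:ℝ) < 1 / N := by positivity
        linarith
      nlinarith [mul_pos ha1 ha2']
    have hLHS : 4 * x * D ^ 2 ≤ 4 * x * (1 / N) ^ 2 :=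
      mul_le_mul_of_nonneg_left hD2.le (by positivity)
    have hmid : 4 * x * (1 / N) ^ 2 < 4 * K := by
      have hp : (0:ℝ) < (1 / N) ^ 2 := by positivity
      have h9 := mul_lt_mul_of_pos_right hxlt hp
      have e3 : N ^ 2 * K * (1 / N) ^ 2 = K := by
        field_simp
      linarith [h9, e3.le, e3.ge]
    linarith
end

section
/- Let n be an integer with n ≥ 5, let K̄ > 0 be a real number, and let x ≥ 0. Then 2x·å″(x) + å′(x) < 2(n−1)/(n(n+2)), where å′(x) = (x/(n−2) + 4K̄)/((n−2)·a(x)) − 1/n, å″(x) = (4n−16)K̄²/((n−2)²·a(x)³), and a(x) = sqrt((x/(n−2) + 4K̄)² + (4n−16)K̄²). -/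
set_option maxHeartbeats 1000000

lemma key_poly (M d K : ℝ) (hM : 0 ≤ M) (hd : 0 ≤ d) (hK : 0 < K) :
    ((M+7)*(8*(M+1)*K^2*d + (d+4*K)*((d+4*K)^2+4*(M+1)*K^2)))^2
      < 9*(M+3)^2*((d+4*K)^2+4*(M+1)*K^2)^3 := by
  have h : 9*(M+3)^2*((d+4*K)^2+4*(M+1)*K^2)^3
      - ((M+7)*(8*(M+1)*K^2*d + (d+4*K)*((d+4*K)^2+4*(M+1)*K^2)))^2
      = 334400*K^6 + 307200*d*K^5 + 137760*d^2*K^4 + 40832*d^3*K^3 + 7476*d^4*K^2 + 768*d^5*K + 32*d^6 + 605760*M*K^6 + 506880*M*d*K^5 + 206592*M*d^2*K^4 + 56960*M*d^3*K^3 + 9708*M*d^4*K^2 + 960*M*d^5*K + 40*M*d^6 + 354176*M^2*K^6 + 242688*M^2*d*K^5 + 78528*M^2*d^2*K^4 + 17536*M^2*d^3*K^3 + 2316*M^2*d^4*K^2 + 192*M^2*d^5*K + 8*M^2*d^6 + 94080*M^3*K^6 + 46080*M^3*d*K^5 + 9984*M^3*d^2*K^4 + 1408*M^3*d^3*K^3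 + 84*M^3*d^4*K^2 + 11840*M^4*K^6 + 3072*M^4*d*K^5 + 288*M^4*d^2*K^4 + 576*M^5*K^6 := by
    ring
  have h2 : (0:ℝ) < 334400*K^6 + 307200*d*K^5 + 137760*d^2*K^4 + 40832*d^3*K^3 + 7476*d^4*K^2 + 768*d^5*K + 32*d^6 + 605760*M*K^6 + 506880*M*d*K^5 + 206592*M*d^2*K^4 + 56960*M*d^3*K^3 + 9708*M*d^4*K^2 + 960*M*d^5*K + 40*M*d^6 + 354176*M^2*K^6 + 242688*M^2*d*K^5 + 78528*M^2*d^2*K^4 + 17536*M^2*d^3*K^3 + 2316*M^2*d^4*K^2 + 192*M^2*d^5*K + 8*M^2*d^6 + 94080*M^3*K^6 + 46080*M^3*d*K^5 + 9984*M^3*d^2*K^4 + 1408*M^3*d^3*K^3 + 84*M^3*d^4*K^2 + 11840*M^4*K^6 + 3072*M^4*d*K^5 + 288*M^4*d^2*K^4 + 576*M^5*K^6 := by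
    positivity
  linarith

/-- For `n ≥ 5`, `K̄ > 0` and `x ≥ 0`, `2x·å″(x) + å′(x) < 2(n−1)/(n(n+2))`. -/
theorem stmt_5 (n : ℕ) (hn : 5 ≤ n) (K x : ℝ) (hK : 0 < K) (hx : 0 ≤ x) :
    2 * x *
        ((4 * (n : ℝ) - 16) * K ^ 2 /
          (((n : ℝ) - 2) ^ 2 *
            Real.sqrt ((x / ((n : ℝ) - 2) + 4 * K) ^ 2 + (4 * (n : ℝ) - 16) * K ^ 2) ^ 3))
      + ((x / ((n : ℝ) - 2) + 4 * K) /
            (((n : ℝ) - 2) *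
              Real.sqrt ((x / ((n : ℝ) - 2) + 4 * K) ^ 2 + (4 * (n : ℝ) - 16) * K ^ 2))
          - 1 / n)
      < 2 * ((n : ℝ) - 1) / ((n : ℝ) * ((n : ℝ) + 2)) := by
  have hN : (5:ℝ) ≤ (n:ℝ) := by exact_mod_cast hn
  have hm : (0:ℝ) < (n:ℝ) - 2 := by linarith
  have hNpos : (0:ℝ) < (n:ℝ) := by linarith
  set u : ℝ := x / ((n : ℝ) - 2) + 4 * K with hu
  set S : ℝ := u ^ 2 + (4 * (n : ℝ) - 16) * K ^ 2 with hS
  have hd : 0 ≤ u - 4 * K := by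
    have : 0 ≤ x / ((n:ℝ) - 2) := div_nonneg hx hm.le
    rw [hu]; linarith
  have hupos : 0 < u := by linarith
  have hSpos : 0 < S := by
    have : (0:ℝ) < (4 * (n:ℝ) - 16) * K ^ 2 := by
      apply mul_pos (by linarith) (by positivity)
    nlinarith
  set a : ℝ := Real.sqrt S with ha
  have hapos : 0 < a := Real.sqrt_pos.mpr hSpos
  have ha2 : a ^ 2 = S := Real.sq_sqrt hSpos.le
  -- key inequality
  set L : ℝ := ((n:ℝ) + 2) * (8 * ((n:ℝ) - 4) * K ^ 2 * (u - 4 * K) + u * S) with hL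
  have hkey2 : L ^ 2 < 9 * ((n:ℝ) - 2) ^ 2 * S ^ 3 := by
    have h := key_poly ((n:ℝ) - 5) (u - 4 * K) K (by linarith) hd hK
    have e : L ^ 2 - 9 * ((n:ℝ) - 2) ^ 2 * S ^ 3
        = (((n:ℝ)-5+7)*(8*((n:ℝ)-5+1)*K^2*(u-4*K) + ((u-4*K)+4*K)*(((u-4*K)+4*K)^2+4*((n:ℝ)-5+1)*K^2)))^2
          - 9*(((n:ℝ)-5)+3)^2*(((u-4*K)+4*K)^2+4*((n:ℝ)-5+1)*K^2)^3 := by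
      rw [hL, hS]; ring
    linarith
  have hLnonneg : 0 ≤ L := by
    have h1 : 0 ≤ 8 * ((n:ℝ) - 4) * K ^ 2 * (u - 4 * K) := by
      apply mul_nonneg (mul_nonneg (by nlinarith) (by positivity)) hd
    have h2 : 0 ≤ u * S := mul_nonneg hupos.le hSpos.le
    have h3 : (0:ℝ) ≤ (n:ℝ) + 2 := by linarith
    rw [hL]; nlinarith
  have hlt : L < 3 * ((n:ℝ) - 2) * a * S := by
    have hR0 : 0 ≤ 3 * ((n:ℝ) - 2) * a * S :=
      le_of_lt (mul_pos (mul_pos (by linarith) hapos) hSpos)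
    refine lt_of_pow_lt_pow_left₀ 2 hR0 ?_
    have hr : (3 * ((n:ℝ) - 2) * a * S) ^ 2 = 9 * ((n:ℝ) - 2) ^ 2 * S ^ 3 := by
      have : (3 * ((n:ℝ) - 2) * a * S) ^ 2 = 9 * ((n:ℝ) - 2) ^ 2 * a ^ 2 * S ^ 2 := by ring
      rw [this, ha2]; ring
    rw [hr]; exact hkey2
  -- finish
  have ha3 : a ^ 3 = S * a := by
    rw [pow_succ, ha2]
  rw [ha3, ← sub_neg]
  have heq : 2 * x * ((4 * (n : ℝ) - 16) * K ^ 2 / (((n : ℝ) - 2) ^ 2 * (S * a)))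
      + (u / (((n : ℝ) - 2) * a) - 1 / (n:ℝ))
      - 2 * ((n : ℝ) - 1) / ((n : ℝ) * ((n : ℝ) + 2))
      = ((n:ℝ) * ((n:ℝ) - 2) * (L - 3 * ((n:ℝ) - 2) * a * S))
        / (((n:ℝ) - 2) ^ 2 * (S * a) * (n:ℝ) * ((n:ℝ) + 2)) := by
    have hane : a ≠ 0 := ne_of_gt hapos
    have hSne : S ≠ 0 := ne_of_gt hSpos
    have hmne : ((n:ℝ) - 2) ≠ 0 := ne_of_gt hm
    have hNne : ((n:ℝ)) ≠ 0 := ne_of_gt hNpos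
    have hN2ne : ((n:ℝ) + 2) ≠ 0 := by positivity
    rw [hL, hu]
    field_simp
    ring
  rw [heq]
  apply div_neg_of_neg_of_pos
  · have h5 : L - 3 * ((n:ℝ) - 2) * a * S < 0 := by linarith
    exact mul_neg_of_pos_of_neg (mul_pos hNpos hm) h5
  · have : 0 < ((n:ℝ) - 2) ^ 2 * (S * a) := by
      exact mul_pos (by positivity) (mul_pos hSpos hapos)
    exact mul_pos (mul_pos this hNpos) (by linarith)
end

section
/- Let n be an integer with n ≥ 5, let K̄ > 0 be a real number, and let x ≥ 0. Then 2å(x) − x/n + x·å′(x) ≤ 4√n·K̄ − (n−8)x/(n(n−2)) − 6(2√n − 4)·x·K̄/(3x + 4√n·(n−2)·K̄), where a(x) = sqrt((x/(n−2) + 4K̄)² + (4n−16)K̄²), å(x) = a(x) − x/n, and å′(x) = (x/(n−2) + 4K̄)/((n−2)·a(x)) − 1/n. -/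
/-!
Substituting `t = x/(n-2)` and `s = √n` turns `a` into `√((t + 4K)² + (4s² - 16)K²)`, and the
`x/n` terms cancel from both sides. What remains is
`(3t² + 20Kt + 8s²K²)/a ≤ (9t² + 12(s+2)Kt + 16s²K²)/(3t + 4sK)`; after clearing denominators and
squaring, the difference of the two sides factors as `t²K²(s-2)` times a polynomial with
nonnegative coefficients for `s ≥ 2`.
-/

lemma two_mul_add_div_eq_of_sq_eq {s t K a : ℝ} (ha0 : a ≠ 0)
    (ha : a ^ 2 = (t + 4 * K) ^ 2 + (4 * s ^ 2 - 16) * K ^ 2) :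
    2 * a + t * (t + 4 * K) / a = (3 * t ^ 2 + 20 * K * t + 8 * s ^ 2 * K ^ 2) / a := by
  field_simp
  linear_combination 2 * ha

lemma add_sub_div_eq_div (s t K : ℝ) (hD : 3 * t + 4 * s * K ≠ 0) :
    4 * s * K + 3 * t - 6 * (2 * s - 4) * t * K / (3 * t + 4 * s * K)
      = (9 * t ^ 2 + 12 * (s + 2) * K * t + 16 * s ^ 2 * K ^ 2) / (3 * t + 4 * s * K) := by
  field_simp
  ring

lemma two_mul_add_div_le_of_sq_eq {s t K a : ℝ} (hs : 2 ≤ s) (ht : 0 ≤ t) (hK : 0 < K)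
    (ha0 : 0 < a) (ha : a ^ 2 = (t + 4 * K) ^ 2 + (4 * s ^ 2 - 16) * K ^ 2) :
    2 * a + t * (t + 4 * K) / a ≤
      4 * s * K + 3 * t - 6 * (2 * s - 4) * t * K / (3 * t + 4 * s * K) := by
  have hD : 0 < 3 * t + 4 * s * K := by positivity
  set P := 3 * t ^ 2 + 20 * K * t + 8 * s ^ 2 * K ^ 2
  set Q := 9 * t ^ 2 + 12 * (s + 2) * K * t + 16 * s ^ 2 * K ^ 2
  have hgap : (Q * a) ^ 2 - (P * (3 * t + 4 * s * K)) ^ 2 = t ^ 2 * K ^ 2 * (s - 2) *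
      (128 * K ^ 2 * s ^ 2 * (5 * s - 8) + 96 * t * K * (s ^ 2 + 14 * s - 24)
        + 36 * t ^ 2 * (5 * s - 6)) := by
    rw [mul_pow Q, ha]
    ring
  have hgap_nonneg : 0 ≤ (Q * a) ^ 2 - (P * (3 * t + 4 * s * K)) ^ 2 := by
    rw [hgap]
    have : 0 ≤ s ^ 2 + 14 * s - 24 := by nlinarith
    have : 0 ≤ 5 * s - 8 := by linarith
    have : 0 ≤ 5 * s - 6 := by linarith
    have : 0 ≤ s - 2 := by linarith
    positivity
  have hPQ : P * (3 * t + 4 * s * K) ≤ Q * a :=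
    le_of_sq_le_sq (by linarith) (by positivity)
  rw [two_mul_add_div_eq_of_sq_eq ha0.ne' ha, add_sub_div_eq_div s t K hD.ne',
    div_le_div_iff₀ ha0 hD]
  linarith

/-- For `n ≥ 5`, `K̄ > 0` and `x ≥ 0`,
`2å − x/n + x·å′ ≤ 4√n·K̄ − (n−8)x/(n(n−2)) − 6(2√n − 4)·x·K̄/(3x + 4√n·(n−2)·K̄)`. -/
theorem stmt_7 (n : ℕ) (hn : 5 ≤ n) (K x : ℝ) (hK : 0 < K) (hx : 0 ≤ x) :
    2 * (Real.sqrt ((x / ((n : ℝ) - 2) + 4 * K) ^ 2 + (4 * (n : ℝ) - 16) * K ^ 2) - x / n)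
        - x / n
        + x *
          ((x / ((n : ℝ) - 2) + 4 * K) /
              (((n : ℝ) - 2) *
                Real.sqrt ((x / ((n : ℝ) - 2) + 4 * K) ^ 2 + (4 * (n : ℝ) - 16) * K ^ 2))
            - 1 / n)
      ≤ 4 * Real.sqrt n * K - ((n : ℝ) - 8) * x / ((n : ℝ) * ((n : ℝ) - 2))
        - 6 * (2 * Real.sqrt n - 4) * x * K /
            (3 * x + 4 * Real.sqrt n * ((n : ℝ) - 2) * K) := by
  have hn5 : (5 : ℝ) ≤ n := by exact_mod_cast hn
  have hn2 : (n : ℝ) - 2 ≠ 0 := by linarith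
  have hs2 : Real.sqrt n ^ 2 = n := Real.sq_sqrt (by linarith)
  have hs : 2 ≤ Real.sqrt n := Real.le_sqrt_of_sq_le (by linarith)
  obtain ⟨t, rfl⟩ : ∃ t, x = ((n : ℝ) - 2) * t := ⟨x / ((n : ℝ) - 2), by field_simp⟩
  have ht : 0 ≤ t := nonneg_of_mul_nonneg_right (by linarith) (by linarith : (0 : ℝ) < n - 2)
  rw [mul_div_cancel_left₀ t hn2]
  set a := Real.sqrt ((t + 4 * K) ^ 2 + (4 * (n : ℝ) - 16) * K ^ 2)
  have hE : 0 < (t + 4 * K) ^ 2 + (4 * (n : ℝ) - 16) * K ^ 2 := by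
    have : 0 < (4 * (n : ℝ) - 16) * K ^ 2 := mul_pos (by linarith) (by positivity)
    positivity
  have ha0 : 0 < a := Real.sqrt_pos.mpr hE
  have ha : a ^ 2 = (t + 4 * K) ^ 2 + (4 * Real.sqrt n ^ 2 - 16) * K ^ 2 := by
    rw [Real.sq_sqrt hE.le, hs2]
  have hD : 3 * (((n : ℝ) - 2) * t) + 4 * Real.sqrt n * ((n : ℝ) - 2) * K ≠ 0 := by
    rw [show 3 * (((n : ℝ) - 2) * t) + 4 * Real.sqrt n * ((n : ℝ) - 2) * K
      = ((n : ℝ) - 2) * (3 * t + 4 * Real.sqrt n * K) by ring]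
    exact mul_ne_zero hn2 (by positivity)
  convert sub_le_sub_right (two_mul_add_div_le_of_sq_eq hs ht hK ha0 ha)
    (4 * (((n : ℝ) - 2) * t) / n) using 1 <;> field_simp <;> ring
end

section
/- Let n be an integer with n ≥ 5, let K̄ > 0 be a real number, and let x ≥ 0. Then (x/(n−2))·(a(x) + n·K̄) − (x/(n−2) + 4n√n·K̄)·(å(x) + a(x) − n·K̄ − x·å′(x)) < −(2xK̄/(n−2))·(2n√n − n + 2) + 4n√n·(n−8)·K̄², where a(x) = sqrt((x/(n−2) + 4K̄)² + (4n−16)K̄²), å(x) = a(x) − x/n, and å′(x) = (x/(n−2) + 4K̄)/((n−2)·a(x)) − 1/n. -/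
/-!
Put `u = x/(n-2)`, `a = √((u + 4K̄)² + (4n-16)K̄²)` and `c = 4n√n K̄`. Then `x·å′(x) = q - x/n`
with `q = u(u + 4K̄)/a`, the `x/n` terms cancel, and the right-hand side minus the left-hand side
is exactly `(u + 2c)(a - (u + 4K̄)) + (u + c)(u - q)`. Both summands are nonnegative because
`a > u + 4K̄ > 0` (as `4n - 16 > 0`) forces `q ≤ u`, and the first one is strictly positive.
-/

lemma lt_sqrt_sq_add {y d : ℝ} (hd : 0 < d) : y < √(y ^ 2 + d) :=
  Real.lt_sqrt_of_sq_lt (by linarith)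

lemma mul_div_sqrt_sq_add_le {u y d : ℝ} (hu : 0 ≤ u) (hy : 0 < y) (hd : 0 < d) :
    u * (y / √(y ^ 2 + d)) ≤ u :=
  mul_le_of_le_one_right hu <|
    (div_le_one (hy.trans (lt_sqrt_sq_add hd))).2 (lt_sqrt_sq_add hd).le

lemma rhs_sub_lhs_eq (N s K u A q : ℝ) :
    (-(2 * u * K) * (2 * N * s - N + 2) + 4 * N * s * (N - 8) * K ^ 2)
        - (u * (A + N * K) - (u + 4 * N * s * K) * (2 * A - N * K - q))
      = (u + 8 * N * s * K) * (A - (u + 4 * K)) + (u + 4 * N * s * K) * (u - q) := by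
  ring

lemma lhs_lt_rhs {N s K u A q : ℝ} (hu : 0 ≤ u) (hNsK : 0 < N * s * K)
    (hA : u + 4 * K < A) (hq : q ≤ u) :
    u * (A + N * K) - (u + 4 * N * s * K) * (2 * A - N * K - q)
      < -(2 * u * K) * (2 * N * s - N + 2) + 4 * N * s * (N - 8) * K ^ 2 := by
  have hpos : 0 < (u + 8 * N * s * K) * (A - (u + 4 * K)) :=
    mul_pos (by linarith) (sub_pos.2 hA)
  have hnonneg : 0 ≤ (u + 4 * N * s * K) * (u - q) :=
    mul_nonneg (by linarith) (sub_nonneg.2 hq)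
  linarith [rhs_sub_lhs_eq N s K u A q]

/-- For `n ≥ 5`, `K̄ > 0` and `x ≥ 0`,
`(x/(n−2))·(a + nK̄) − (x/(n−2) + 4n√n·K̄)·(å + a − nK̄ − x·å′)
  < −(2xK̄/(n−2))·(2n√n − n + 2) + 4n√n·(n−8)·K̄²`. -/
theorem stmt_8 (n : ℕ) (hn : 5 ≤ n) (K x : ℝ) (hK : 0 < K) (hx : 0 ≤ x) :
    x / ((n : ℝ) - 2) *
        (Real.sqrt ((x / ((n : ℝ) - 2) + 4 * K) ^ 2 + (4 * (n : ℝ) - 16) * K ^ 2) + (n : ℝ) * K)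
      - (x / ((n : ℝ) - 2) + 4 * (n : ℝ) * Real.sqrt n * K) *
          ((Real.sqrt ((x / ((n : ℝ) - 2) + 4 * K) ^ 2 + (4 * (n : ℝ) - 16) * K ^ 2) - x / n)
            + Real.sqrt ((x / ((n : ℝ) - 2) + 4 * K) ^ 2 + (4 * (n : ℝ) - 16) * K ^ 2)
            - (n : ℝ) * K
            - x *
              ((x / ((n : ℝ) - 2) + 4 * K) /
                  (((n : ℝ) - 2) *
                    Real.sqrt ((x / ((n : ℝ) - 2) + 4 * K) ^ 2 + (4 * (n : ℝ) - 16) * K ^ 2))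
                - 1 / n))
      < -(2 * x * K / ((n : ℝ) - 2)) * (2 * (n : ℝ) * Real.sqrt n - (n : ℝ) + 2)
        + 4 * (n : ℝ) * Real.sqrt n * ((n : ℝ) - 8) * K ^ 2 := by
  have hn5 : (5 : ℝ) ≤ n := by exact_mod_cast hn
  have hn2 : (0 : ℝ) < n - 2 := by linarith
  have hd : 0 < (4 * (n : ℝ) - 16) * K ^ 2 := by nlinarith [sq_pos_of_pos hK]
  have hx_eq : x = x / (n - 2) * (n - 2) := (div_mul_cancel₀ x hn2.ne').symm
  set u := x / ((n : ℝ) - 2)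
  have hu : 0 ≤ u := div_nonneg hx hn2.le
  have hA := lt_sqrt_sq_add (y := u + 4 * K) hd
  have hq := mul_div_sqrt_sq_add_le (y := u + 4 * K) hu (by positivity) hd
  set A := √((u + 4 * K) ^ 2 + (4 * (n : ℝ) - 16) * K ^ 2)
  have hxA : x * ((u + 4 * K) / ((n - 2) * A) - 1 / n) = u * ((u + 4 * K) / A) - x / n := by
    rw [hx_eq]
    field_simp
  have h2xK : 2 * x * K / ((n : ℝ) - 2) = 2 * u * K := by rw [hx_eq]; field_simp
  rw [hxA, h2xK]
  have key := lhs_lt_rhs (N := n) (s := √n) hu (by positivity) hA hq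
  convert key using 2
  ring
end

section
/- Let n be an integer with n ≥ 5, let K̄ > 0 be a real number, and let x ≥ 0. Setting A(x) = sqrt(x² + 8x(n−2)K̄ + 4n(n−2)²K̄²), one has 3x + 4√n·(n−2)·K̄ − (3x² + 20(n−2)·x·K̄ + 8n(n−2)²·K̄²)/A(x) ≥ 6(2√n − 4)·(n−2)·x·K̄/(3x + 4√n·(n−2)·K̄). -/
lemma key_poly_s12 (s x K : ℝ) (hs : 2 ≤ s) (hx : 0 ≤ x) (hK : 0 ≤ K) :
    ((3 * x ^ 2 + 20 * (s ^ 2 - 2) * x * K + 8 * s ^ 2 * (s ^ 2 - 2) ^ 2 * K ^ 2)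
        * (3 * x + 4 * s * (s ^ 2 - 2) * K)) ^ 2
      ≤ (x ^ 2 + 8 * x * (s ^ 2 - 2) * K + 4 * s ^ 2 * (s ^ 2 - 2) ^ 2 * K ^ 2)
        * (9 * x ^ 2 + (12 * s + 24) * (s ^ 2 - 2) * K * x
            + 16 * s ^ 2 * (s ^ 2 - 2) ^ 2 * K ^ 2) ^ 2 := by
  obtain ⟨t, ht, rfl⟩ : ∃ t, 0 ≤ t ∧ s = t + 2 := ⟨s - 2, by linarith, by ring⟩
  have hH : (0:ℝ) ≤ 576*t + 3024*t^2 + 5760*t^3 + 4752*t^4 + 1584*t^5 + 180*t^6 := by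
    have h2 := pow_nonneg ht 2; have h3 := pow_nonneg ht 3
    have h4 := pow_nonneg ht 4; have h5 := pow_nonneg ht 5
    have h6 := pow_nonneg ht 6
    linarith
  have hG : (0:ℝ) ≤ 6144*t + 50688*t^2 + 166656*t^3 + 277248*t^4 + 245376*t^5
      + 113280*t^6 + 26688*t^7 + 2880*t^8 + 96*t^9 := by
    have h2 := pow_nonneg ht 2; have h3 := pow_nonneg ht 3
    have h4 := pow_nonneg ht 4; have h5 := pow_nonneg ht 5
    have h6 := pow_nonneg ht 6; have h7 := pow_nonneg ht 7
    have h8 := pow_nonneg ht 8; have h9 := pow_nonneg ht 9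
    linarith
  have hF : (0:ℝ) ≤ 16384*t + 188416*t^2 + 929792*t^3 + 2582528*t^4 + 4456448*t^5
      + 4988928*t^6 + 3688448*t^7 + 1805312*t^8 + 576512*t^9 + 115200*t^10
      + 13056*t^11 + 640*t^12 := by
    have h2 := pow_nonneg ht 2; have h3 := pow_nonneg ht 3
    have h4 := pow_nonneg ht 4; have h5 := pow_nonneg ht 5
    have h6 := pow_nonneg ht 6; have h7 := pow_nonneg ht 7
    have h8 := pow_nonneg ht 8; have h9 := pow_nonneg ht 9
    have h10 := pow_nonneg ht 10; have h11 := pow_nonneg ht 11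
    have h12 := pow_nonneg ht 12
    linarith
  have hmain : (0:ℝ) ≤ x^2 * K^2 *
      (x^2 * (576*t + 3024*t^2 + 5760*t^3 + 4752*t^4 + 1584*t^5 + 180*t^6)
        + x * K * (6144*t + 50688*t^2 + 166656*t^3 + 277248*t^4 + 245376*t^5
            + 113280*t^6 + 26688*t^7 + 2880*t^8 + 96*t^9)
        + K^2 * (16384*t + 188416*t^2 + 929792*t^3 + 2582528*t^4 + 4456448*t^5
            + 4988928*t^6 + 3688448*t^7 + 1805312*t^8 + 576512*t^9 + 115200*t^10
            + 13056*t^11 + 640*t^12)) := by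
    apply mul_nonneg (mul_nonneg (sq_nonneg x) (sq_nonneg K))
    exact add_nonneg (add_nonneg (mul_nonneg (sq_nonneg x) hH)
      (mul_nonneg (mul_nonneg hx hK) hG)) (mul_nonneg (sq_nonneg K) hF)
  nlinarith [hmain]

/-- For `n ≥ 5`, `K̄ > 0` and `x ≥ 0`, with `A(x) = √(x² + 8x(n−2)K̄ + 4n(n−2)²K̄²)`,
`3x + 4√n·(n−2)·K̄ − (3x² + 20(n−2)xK̄ + 8n(n−2)²K̄²)/A(x)
  ≥ 6(2√n − 4)·(n−2)·x·K̄/(3x + 4√n·(n−2)·K̄)`. -/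
theorem stmt_12 (n : ℕ) (hn : 5 ≤ n) (K x : ℝ) (hK : 0 < K) (hx : 0 ≤ x) :
    3 * x + 4 * Real.sqrt n * ((n : ℝ) - 2) * K
        - (3 * x ^ 2 + 20 * ((n : ℝ) - 2) * x * K
            + 8 * (n : ℝ) * ((n : ℝ) - 2) ^ 2 * K ^ 2) /
          Real.sqrt (x ^ 2 + 8 * x * ((n : ℝ) - 2) * K
            + 4 * (n : ℝ) * ((n : ℝ) - 2) ^ 2 * K ^ 2)
      ≥ 6 * (2 * Real.sqrt n - 4) * ((n : ℝ) - 2) * x * K /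
          (3 * x + 4 * Real.sqrt n * ((n : ℝ) - 2) * K) := by
  set s := Real.sqrt (n : ℝ) with hsdef
  have hn5 : (5:ℝ) ≤ (n:ℝ) := by exact_mod_cast hn
  have hs0 : 0 ≤ s := Real.sqrt_nonneg _
  have hs2 : s ^ 2 = (n : ℝ) := Real.sq_sqrt (by positivity)
  have hs : 2 ≤ s := by nlinarith
  rw [← hs2]
  have hm : (0:ℝ) < s ^ 2 - 2 := by nlinarith
  set m := s ^ 2 - 2 with hmdef
  have hB : 0 < 3 * x + 4 * s * m * K := by
    have : 0 < 4 * s * m * K := by positivity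
    linarith
  have hN : 0 ≤ 3 * x ^ 2 + 20 * m * x * K + 8 * s ^ 2 * m ^ 2 * K ^ 2 := by positivity
  have hD : 0 < x ^ 2 + 8 * x * m * K + 4 * s ^ 2 * m ^ 2 * K ^ 2 := by positivity
  have hC : 0 < 9 * x ^ 2 + (12 * s + 24) * m * K * x + 16 * s ^ 2 * m ^ 2 * K ^ 2 := by
    positivity
  set D := x ^ 2 + 8 * x * m * K + 4 * s ^ 2 * m ^ 2 * K ^ 2 with hDdef
  set N := 3 * x ^ 2 + 20 * m * x * K + 8 * s ^ 2 * m ^ 2 * K ^ 2 with hNdef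
  set B := 3 * x + 4 * s * m * K with hBdef
  set C := 9 * x ^ 2 + (12 * s + 24) * m * K * x + 16 * s ^ 2 * m ^ 2 * K ^ 2 with hCdef
  have hApos : 0 < Real.sqrt D := Real.sqrt_pos.mpr hD
  have hkey : (N * B) ^ 2 ≤ D * C ^ 2 := by
    have := key_poly_s12 s x K hs hx hK.le
    rw [hDdef, hNdef, hBdef, hCdef, hmdef]
    nlinarith [this]
  have hNB : N * B ≤ C * Real.sqrt D := by
    calc N * B = Real.sqrt ((N * B) ^ 2) := (Real.sqrt_sq (mul_nonneg hN hB.le)).symm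
      _ ≤ Real.sqrt (D * C ^ 2) := Real.sqrt_le_sqrt hkey
      _ = Real.sqrt D * Real.sqrt (C ^ 2) := Real.sqrt_mul hD.le _
      _ = C * Real.sqrt D := by rw [Real.sqrt_sq hC.le]; ring
  have hdiv : N / Real.sqrt D ≤ C / B := (div_le_div_iff₀ hApos hB).mpr hNB
  have h2 : 6 * (2 * s - 4) * m * x * K / B = B - C / B := by
    field_simp
    rw [hBdef, hCdef]
    ring
  rw [ge_iff_le, h2]
  linarith
end

section
/- Let X and Y be real n×n matrices with X symmetric. Then ‖XY − YX‖_F² ≤ 2·‖X‖_F²·‖Y‖_F², where ‖M‖_F² = ∑_{i,j} M_{ij}² is the squared Frobenius norm. -/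
/-!
Diagonalize the symmetric matrix `X = U D Uᵀ` with `U` orthogonal and `D = diag(λ)`. Conjugation by
`U` preserves the Frobenius norm and commutators, so with `Z = Uᵀ Y U` the claim becomes a bound
for `DZ - ZD`, whose `(i, j)` entry is `(λᵢ - λⱼ) Zᵢⱼ`. It then suffices that
`(λᵢ - λⱼ)² ≤ 2(λᵢ² + λⱼ²) ≤ 2 ∑ₖ λₖ²`.
-/

open Matrix

theorem sq_sub_le_two_mul_sum_sq {ι : Type*} [Fintype ι] (d : ι → ℝ) (i j : ι) :
    (d i - d j) ^ 2 ≤ 2 * ∑ k, d k ^ 2 := by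
  classical
  obtain rfl | hij := eq_or_ne i j
  · simpa using Finset.sum_nonneg fun k _ ↦ sq_nonneg (d k)
  have hpair : d i ^ 2 + d j ^ 2 ≤ ∑ k, d k ^ 2 := by
    rw [← Finset.sum_pair hij (f := fun k ↦ d k ^ 2)]
    exact Finset.sum_le_univ_sum_of_nonneg fun k ↦ sq_nonneg (d k)
  nlinarith [sq_nonneg (d i + d j)]

namespace Matrix

variable {m n : Type*} [Fintype m] [Fintype n]

theorem sum_sq_entries_eq_trace_conjTranspose_mul (M : Matrix m n ℝ) :
    ∑ i, ∑ j, M i j ^ 2 = trace (Mᴴ * M) := by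
  simp only [trace, diag, mul_apply, conjTranspose_apply, star_trivial, sq]
  exact Finset.sum_comm

variable [DecidableEq n]

theorem sum_sq_entries_conjStarAlgAut (U : unitaryGroup n ℝ) (A : Matrix n n ℝ) :
    ∑ i, ∑ j, Unitary.conjStarAlgAut ℝ _ U A i j ^ 2 = ∑ i, ∑ j, A i j ^ 2 := by
  rw [sum_sq_entries_eq_trace_conjTranspose_mul, sum_sq_entries_eq_trace_conjTranspose_mul,
    ← star_eq_conjTranspose, ← map_star, ← map_mul, Unitary.conjStarAlgAut_apply, trace_mul_cycle,
    Unitary.coe_star_mul_self, one_mul, star_eq_conjTranspose]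

theorem sum_sq_entries_diagonal (d : n → ℝ) :
    ∑ i, ∑ j, diagonal d i j ^ 2 = ∑ i, d i ^ 2 := by
  simp [diagonal_apply]

theorem sum_sq_entries_diagonal_mul_sub_mul_diagonal_le (d : n → ℝ) (Z : Matrix n n ℝ) :
    ∑ i, ∑ j, (diagonal d * Z - Z * diagonal d) i j ^ 2 ≤
      2 * (∑ k, d k ^ 2) * ∑ i, ∑ j, Z i j ^ 2 := by
  have hentry (i j : n) : (diagonal d * Z - Z * diagonal d) i j = (d i - d j) * Z i j := by
    simp only [sub_apply, diagonal_mul, mul_diagonal]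
    ring
  simp_rw [hentry, mul_pow]
  rw [Finset.mul_sum]
  gcongr with i
  rw [Finset.mul_sum]
  gcongr with j
  exact sq_sub_le_two_mul_sum_sq d i j

end Matrix

/-- For real `n×n` matrices `X, Y` with `X` symmetric, the commutator satisfies
`‖XY − YX‖_F² ≤ 2‖X‖_F²‖Y‖_F²`, where `‖M‖_F² = ∑_{i,j} M_{ij}²`. -/
theorem stmt_13 {n : ℕ} (X Y : Matrix (Fin n) (Fin n) ℝ) (hX : X.IsSymm) :
    ∑ i, ∑ j, ((X * Y - Y * X) i j) ^ 2 ≤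
      2 * (∑ i, ∑ j, (X i j) ^ 2) * (∑ i, ∑ j, (Y i j) ^ 2) := by
  have hH : X.IsHermitian := isHermitian_iff_isSymm.mpr hX
  set φ := Unitary.conjStarAlgAut ℝ _ hH.eigenvectorUnitary
  obtain ⟨Z, rfl⟩ : ∃ Z, φ Z = Y := ⟨φ.symm Y, φ.apply_symm_apply Y⟩
  have hXD : X = φ (diagonal hH.eigenvalues) := by
    simpa [φ, RCLike.ofReal_real_eq_id] using hH.spectral_theorem
  rw [hXD, ← map_mul, ← map_mul, ← map_sub]
  simp only [φ, sum_sq_entries_conjStarAlgAut, sum_sq_entries_diagonal]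
  exact sum_sq_entries_diagonal_mul_sub_mul_diagonal_le _ _
end

section
/- Let n ≥ 1 and m ≥ 1 be integers. Let h, A_1, …, A_m be real symmetric n×n matrices and let B_1, …, B_m be arbitrary real n×n matrices. Set S = ∑_{β} ‖A_β‖_F², ‖B‖ = sqrt(∑_{β} ‖B_β‖_F²), and R_β = B_β + (h·A_β − A_β·h) for each β. Then ∑_{β} (tr(h·A_β))² + ∑_{β} ‖R_β‖_F² ≤ 2·‖h‖_F²·S + ‖B‖² + 4·‖B‖·‖h‖_F·√S. -/
open Matrix

open Matrix Finset in
-- scalar Cauchy-Schwarz in sqrt form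
private lemma cs_sqrt {ι : Type*} [Fintype ι] (f g : ι → ℝ) :
    ∑ i, f i * g i ≤ Real.sqrt (∑ i, f i ^ 2) * Real.sqrt (∑ i, g i ^ 2) := by
  have h := Finset.sum_mul_sq_le_sq_mul_sq Finset.univ f g
  calc ∑ i, f i * g i ≤ |∑ i, f i * g i| := le_abs_self _
    _ = Real.sqrt ((∑ i, f i * g i) ^ 2) := (Real.sqrt_sq_eq_abs _).symm
    _ ≤ Real.sqrt ((∑ i, f i ^ 2) * ∑ i, g i ^ 2) := Real.sqrt_le_sqrt h
    _ = _ := Real.sqrt_mul (Finset.sum_nonneg fun i _ => sq_nonneg _) _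

private lemma scalar_key {n : ℕ} (d : Fin n → ℝ) (a : Fin n → Fin n → ℝ) :
    (∑ i, d i * a i i) ^ 2 + ∑ i, ∑ j, ((d i - d j) * a i j) ^ 2
      ≤ 2 * (∑ i, (d i) ^ 2) * (∑ i, ∑ j, (a i j) ^ 2) := by
  set K := ∑ i, (d i) ^ 2 with hK
  have hK0 : 0 ≤ K := Finset.sum_nonneg fun i _ => sq_nonneg _
  have h1 : (∑ i, d i * a i i) ^ 2 ≤ K * ∑ i, (a i i) ^ 2 :=
    Finset.sum_mul_sq_le_sq_mul_sq _ _ _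
  have h2 : ∀ i j : Fin n, ((d i - d j) * a i j) ^ 2
      ≤ 2 * K * (a i j) ^ 2 - 2 * K * (if i = j then (a i j) ^ 2 else 0) := by
    intro i j
    by_cases hij : i = j
    · subst hij; simp
    · have hdd : (d i) ^ 2 + (d j) ^ 2 ≤ K := by
        have e : d i ^ 2 + d j ^ 2 = ∑ k ∈ ({i, j} : Finset (Fin n)), d k ^ 2 :=
          (Finset.sum_pair (f := fun k => d k ^ 2) hij).symm
        rw [hK, e]
        exact Finset.sum_le_sum_of_subset_of_nonneg (Finset.subset_univ _)
          (fun k _ _ => sq_nonneg _)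
      have hd : (d i - d j) ^ 2 ≤ 2 * K := by nlinarith [sq_nonneg (d i + d j)]
      simp only [hij, if_false, mul_zero, sub_zero]
      calc ((d i - d j) * a i j) ^ 2 = (d i - d j) ^ 2 * (a i j) ^ 2 := by ring
        _ ≤ 2 * K * (a i j) ^ 2 := mul_le_mul_of_nonneg_right hd (sq_nonneg _)
  have h3 : ∑ i, ∑ j, ((d i - d j) * a i j) ^ 2
      ≤ 2 * K * (∑ i, ∑ j, (a i j) ^ 2) - 2 * K * (∑ i, (a i i) ^ 2) := by
    calc ∑ i, ∑ j, ((d i - d j) * a i j) ^ 2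
        ≤ ∑ i, ∑ j, (2 * K * (a i j) ^ 2 - 2 * K * (if i = j then (a i j) ^ 2 else 0)) :=
          Finset.sum_le_sum fun i _ => Finset.sum_le_sum fun j _ => h2 i j
      _ = _ := by
          simp [Finset.sum_sub_distrib, Finset.mul_sum, Finset.sum_ite_eq, Finset.mem_univ]
  have h4 : 0 ≤ ∑ i, (a i i) ^ 2 := Finset.sum_nonneg fun i _ => sq_nonneg _
  nlinarith [mul_nonneg hK0 h4]

open Matrix in
private lemma frob_eq_trace {n : ℕ} (M : Matrix (Fin n) (Fin n) ℝ) :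
    ∑ i, ∑ j, (M i j) ^ 2 = Matrix.trace (M * Mᵀ) := by
  simp [Matrix.trace, Matrix.mul_apply, Matrix.diag, sq]

private lemma mat_key {n : ℕ} (h A : Matrix (Fin n) (Fin n) ℝ)
    (hh : h.IsSymm) (hA : A.IsSymm) :
    (Matrix.trace (h * A)) ^ 2 + ∑ i, ∑ j, ((h * A - A * h) i j) ^ 2
      ≤ 2 * (∑ i, ∑ j, (h i j) ^ 2) * (∑ i, ∑ j, (A i j) ^ 2) := by
  have hH : h.IsHermitian := by
    rw [Matrix.IsHermitian, Matrix.conjTranspose_eq_transpose_of_trivial]; exact hh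
  set V : Matrix (Fin n) (Fin n) ℝ := (Matrix.IsHermitian.eigenvectorUnitary hH :
    Matrix (Fin n) (Fin n) ℝ) with hVdef
  set d : Fin n → ℝ := hH.eigenvalues with hddef
  have hV1 : V * star V = 1 :=
    Matrix.mem_unitaryGroup_iff.mp (Matrix.IsHermitian.eigenvectorUnitary hH).2
  have hV2 : star V * V = 1 :=
    Matrix.mem_unitaryGroup_iff'.mp (Matrix.IsHermitian.eigenvectorUnitary hH).2
  have cancel1 : ∀ M : Matrix (Fin n) (Fin n) ℝ, V * (star V * M) = M := fun M => by
    rw [← Matrix.mul_assoc, hV1, Matrix.one_mul]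
  have cancel2 : ∀ M : Matrix (Fin n) (Fin n) ℝ, star V * (V * M) = M := fun M => by
    rw [← Matrix.mul_assoc, hV2, Matrix.one_mul]
  have hspec : h = V * Matrix.diagonal d * star V := by
    have := hH.spectral_theorem
    simpa using this
  set A' : Matrix (Fin n) (Fin n) ℝ := star V * A * V with hA'def
  -- conjugation identities
  have hconj : star V * (h * A - A * h) * V
      = Matrix.diagonal d * A' - A' * Matrix.diagonal d := by
    rw [hspec]
    simp only [Matrix.sub_mul, Matrix.mul_sub, hA'def, Matrix.mul_assoc, cancel1, cancel2, hV1, hV2, Matrix.mul_one]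
  have htr : Matrix.trace (h * A) = Matrix.trace (Matrix.diagonal d * A') := by
    rw [hspec, hA'def]
    calc Matrix.trace (V * Matrix.diagonal d * star V * A)
        = Matrix.trace (V * (Matrix.diagonal d * (star V * A))) := by
          simp only [Matrix.mul_assoc]
      _ = Matrix.trace ((Matrix.diagonal d * (star V * A)) * V) :=
          Matrix.trace_mul_comm _ _
      _ = Matrix.trace (Matrix.diagonal d * (star V * A * V)) := by
          simp only [Matrix.mul_assoc]
  have hVt : star V = Vᵀ := by
    ext i j; simp [Matrix.star_apply, Matrix.transpose_apply]
  have frobconj : ∀ M : Matrix (Fin n) (Fin n) ℝ,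
      ∑ i, ∑ j, ((star V * M * V) i j) ^ 2 = ∑ i, ∑ j, (M i j) ^ 2 := by
    intro M
    rw [frob_eq_trace, frob_eq_trace]
    have h2 : (star V)ᵀ = V := by rw [hVt, Matrix.transpose_transpose]
    have e1 : (star V * M * V)ᵀ = star V * (Mᵀ * V) := by
      rw [Matrix.transpose_mul, Matrix.transpose_mul, ← hVt, h2]
    rw [e1]
    calc Matrix.trace (star V * M * V * (star V * (Mᵀ * V)))
        = Matrix.trace (star V * (M * (Mᵀ * V))) := by
          simp only [Matrix.mul_assoc, cancel1]
      _ = Matrix.trace ((M * (Mᵀ * V)) * star V) := Matrix.trace_mul_comm _ _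
      _ = Matrix.trace (M * Mᵀ) := by
          simp only [Matrix.mul_assoc, hV1, Matrix.mul_one]
  -- the three Frobenius-norm identities
  have hnormA : ∑ i, ∑ j, (A' i j) ^ 2 = ∑ i, ∑ j, (A i j) ^ 2 := frobconj A
  have hDh : star V * h * V = Matrix.diagonal d := by
    rw [hspec]
    simp only [Matrix.mul_assoc, cancel2, hV2, Matrix.mul_one]
  have hnormh : ∑ i, ∑ j, (h i j) ^ 2 = ∑ i, (d i) ^ 2 := by
    rw [← frobconj h, hDh]
    simp [Matrix.diagonal_apply, apply_ite (· ^ 2), Finset.sum_ite_eq, Finset.mem_univ]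
  have hnormC : ∑ i, ∑ j, ((h * A - A * h) i j) ^ 2
      = ∑ i, ∑ j, ((d i - d j) * A' i j) ^ 2 := by
    rw [← frobconj (h * A - A * h), hconj]
    refine Finset.sum_congr rfl fun i _ => Finset.sum_congr rfl fun j _ => ?_
    rw [Matrix.sub_apply, Matrix.diagonal_mul, Matrix.mul_diagonal]
    ring
  have htr2 : Matrix.trace (Matrix.diagonal d * A') = ∑ i, d i * A' i i := by
    simp [Matrix.trace, Matrix.diag, Matrix.diagonal_mul]
  rw [htr, htr2, hnormC, hnormh, ← hnormA]
  exact scalar_key d (fun i j => A' i j)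

private lemma cs_sqrt2 {ι κ : Type*} [Fintype ι] [Fintype κ] (f g : ι → κ → ℝ) :
    ∑ i, ∑ j, f i j * g i j
      ≤ Real.sqrt (∑ i, ∑ j, (f i j) ^ 2) * Real.sqrt (∑ i, ∑ j, (g i j) ^ 2) := by
  have := cs_sqrt (fun p : ι × κ => f p.1 p.2) (fun p : ι × κ => g p.1 p.2)
  simpa [Fintype.sum_prod_type] using this

/-- Pointwise algebraic content of inequality (4.5) of Lemma 4.1: for symmetric
matrices `h, A_β`, arbitrary matrices `B_β`, and `R_β = B_β + [h, A_β]`,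
`∑_β (tr(h A_β))² + ∑_β ‖R_β‖_F² ≤ 2‖h‖_F²·S + ‖B‖² + 4‖B‖·‖h‖_F·√S`,
where `S = ∑_β ‖A_β‖_F²` and `‖B‖² = ∑_β ‖B_β‖_F²`. -/
theorem stmt_15 {n m : ℕ} (hn : 1 ≤ n) (hm : 1 ≤ m)
    (h : Matrix (Fin n) (Fin n) ℝ) (hh : h.IsSymm)
    (A B : Fin m → Matrix (Fin n) (Fin n) ℝ) (hA : ∀ β, (A β).IsSymm) :
    (∑ β, (Matrix.trace (h * A β)) ^ 2)
      + ∑ β, ∑ i, ∑ j, ((B β + (h * A β - A β * h)) i j) ^ 2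
      ≤ 2 * (∑ i, ∑ j, (h i j) ^ 2) * (∑ β, ∑ i, ∑ j, (A β i j) ^ 2)
        + (∑ β, ∑ i, ∑ j, (B β i j) ^ 2)
        + 4 * Real.sqrt (∑ β, ∑ i, ∑ j, (B β i j) ^ 2)
            * Real.sqrt (∑ i, ∑ j, (h i j) ^ 2)
            * Real.sqrt (∑ β, ∑ i, ∑ j, (A β i j) ^ 2) := by
  set H : ℝ := ∑ i, ∑ j, (h i j) ^ 2 with hHdef
  set S : ℝ := ∑ β, ∑ i, ∑ j, (A β i j) ^ 2 with hSdef
  set BB : ℝ := ∑ β, ∑ i, ∑ j, (B β i j) ^ 2 with hBBdef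
  set C : Fin m → Matrix (Fin n) (Fin n) ℝ := fun β => h * A β - A β * h with hCdef
  set CC : ℝ := ∑ β, ∑ i, ∑ j, (C β i j) ^ 2 with hCCdef
  set T : ℝ := ∑ β, (Matrix.trace (h * A β)) ^ 2 with hTdef
  have hH0 : 0 ≤ H := Finset.sum_nonneg fun i _ => Finset.sum_nonneg fun j _ => sq_nonneg _
  have hS0 : 0 ≤ S := Finset.sum_nonneg fun β _ =>
    Finset.sum_nonneg fun i _ => Finset.sum_nonneg fun j _ => sq_nonneg _
  have hBB0 : 0 ≤ BB := Finset.sum_nonneg fun β _ =>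
    Finset.sum_nonneg fun i _ => Finset.sum_nonneg fun j _ => sq_nonneg _
  have hCC0 : 0 ≤ CC := Finset.sum_nonneg fun β _ =>
    Finset.sum_nonneg fun i _ => Finset.sum_nonneg fun j _ => sq_nonneg _
  -- key inequality summed over β
  have sumkey : T + CC ≤ 2 * H * S := by
    rw [hTdef, hCCdef, ← Finset.sum_add_distrib]
    calc ∑ β, ((Matrix.trace (h * A β)) ^ 2 + ∑ i, ∑ j, (C β i j) ^ 2)
        ≤ ∑ β, 2 * H * (∑ i, ∑ j, (A β i j) ^ 2) :=
          Finset.sum_le_sum fun β _ => mat_key h (A β) hh (hA β)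
      _ = 2 * H * S := by rw [hSdef]; exact (Finset.mul_sum _ _ _).symm
  -- expansion of the squared sum
  have expand : ∑ β, ∑ i, ∑ j, ((B β + C β) i j) ^ 2
      = BB + 2 * (∑ β, ∑ i, ∑ j, B β i j * C β i j) + CC := by
    rw [hBBdef, hCCdef]
    simp only [Matrix.add_apply, add_sq, Finset.sum_add_distrib, Finset.mul_sum]
    ring_nf
  -- cross term bound
  have cross : ∑ β, ∑ i, ∑ j, B β i j * C β i j ≤ Real.sqrt BB * Real.sqrt CC := by
    calc ∑ β, ∑ i, ∑ j, B β i j * C β i j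
        ≤ ∑ β, Real.sqrt (∑ i, ∑ j, (B β i j) ^ 2) * Real.sqrt (∑ i, ∑ j, (C β i j) ^ 2) :=
          Finset.sum_le_sum fun β _ => cs_sqrt2 _ _
      _ ≤ Real.sqrt (∑ β, (Real.sqrt (∑ i, ∑ j, (B β i j) ^ 2)) ^ 2)
            * Real.sqrt (∑ β, (Real.sqrt (∑ i, ∑ j, (C β i j) ^ 2)) ^ 2) := cs_sqrt _ _
      _ = Real.sqrt BB * Real.sqrt CC := by
          rw [hBBdef, hCCdef]
          congr 2 <;> refine Finset.sum_congr rfl fun β _ => Real.sq_sqrt ?_ <;>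
            exact Finset.sum_nonneg fun i _ => Finset.sum_nonneg fun j _ => sq_nonneg _
  have hT0 : 0 ≤ T := Finset.sum_nonneg fun β _ => sq_nonneg _
  clear_value H S BB CC T
  have hCCle : CC ≤ 2 * H * S := by
    linarith
  have hsqrtCC : Real.sqrt CC ≤ Real.sqrt 2 * Real.sqrt H * Real.sqrt S := by
    calc Real.sqrt CC ≤ Real.sqrt (2 * H * S) := Real.sqrt_le_sqrt hCCle
      _ = Real.sqrt 2 * Real.sqrt H * Real.sqrt S := by
          rw [Real.sqrt_mul (by positivity), Real.sqrt_mul (by norm_num : (0:ℝ) ≤ 2)]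
  have hs2 : Real.sqrt 2 ≤ 2 := by
    nlinarith [Real.sq_sqrt (by norm_num : (0:ℝ) ≤ 2), Real.sqrt_nonneg 2]
  have crossfinal : 2 * (∑ β, ∑ i, ∑ j, B β i j * C β i j)
      ≤ 4 * Real.sqrt BB * Real.sqrt H * Real.sqrt S := by
    have h1 : Real.sqrt BB * Real.sqrt CC
        ≤ Real.sqrt BB * (Real.sqrt 2 * Real.sqrt H * Real.sqrt S) :=
      mul_le_mul_of_nonneg_left hsqrtCC (Real.sqrt_nonneg _)
    have hP : 0 ≤ Real.sqrt BB * Real.sqrt H * Real.sqrt S := by positivity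
    have h3 : Real.sqrt 2 * (Real.sqrt BB * Real.sqrt H * Real.sqrt S)
        ≤ 2 * (Real.sqrt BB * Real.sqrt H * Real.sqrt S) :=
      mul_le_mul_of_nonneg_right hs2 hP
    have h4 : Real.sqrt BB * (Real.sqrt 2 * Real.sqrt H * Real.sqrt S)
        = Real.sqrt 2 * (Real.sqrt BB * Real.sqrt H * Real.sqrt S) := by ring
    have h5 : 4 * Real.sqrt BB * Real.sqrt H * Real.sqrt S
        = 2 * (2 * (Real.sqrt BB * Real.sqrt H * Real.sqrt S)) := by ring
    rw [h5]
    linarith [cross]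
  rw [expand]
  linarith
end

section
/- Let n ≥ 1 and m ≥ 1 be integers. Let A_1, …, A_m be real symmetric n×n matrices and let B_{αβ} (for α, β ∈ {1, …, m}) be arbitrary real n×n matrices. Set S = ∑_{α} ‖A_α‖_F² and ‖B‖ = sqrt(∑_{α,β} ‖B_{αβ}‖_F²). Then ∑_{α,β} (tr(A_α A_β))² + ∑_{α,β} ‖B_{αβ} + (A_α A_β − A_β A_α)‖_F² ≤ (3/2)·S² + ‖B‖² + 4·‖B‖·S. -/
/-!
Write `S = ∑ ‖A_α‖²`, `T = ∑ tr(A_α A_β)²` and `Q = ∑ ‖[A_α, A_β]‖²`. Expanding the squares, the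
left-hand side is `T + Q + ‖B‖² + 2 ∑ ⟪B_{αβ}, [A_α, A_β]⟫`. The Li–Li inequality
`T + Q ≤ (3/2) S²` handles the terms without `B`; it also gives `Q ≤ (2S)²`, so by Cauchy–Schwarz
the cross term is at most `2 ‖B‖ · 2S`.

For the Li–Li inequality, rotate the family by an orthogonal matrix diagonalising its Gram matrix
`(⟪A_α, A_β⟫)`: this leaves `S`, `T` and `Q` unchanged and makes the `A_α` pairwise orthogonal, so
that `T = ∑ σ_α²` with `σ_α = ‖A_α‖²`. Diagonalising one `A_α = diag λ` turns
`∑_{β ≠ α} ‖[A_β, A_α]‖²` into the Laplacian form `∑ w_ij (λ_i - λ_j)²` of a weighted graph whose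
total weight is at most `∑_{β ≠ α} σ_β` and whose edge weights are at most `M/2` by Bessel's
inequality, `M` being any bound for the `σ_β`, `β ≠ α`. The Anderson–Morley bound on the Laplacian
then gives `σ_α (∑_{β ≠ α} σ_β + M)`. Taking for `M` the largest `σ_β`, or for the largest one
itself the sum of the others, and summing over `α` gives `Q ≤ S² - ∑ σ_α² + S²/2`.
-/

open Finset Matrix
open scoped Kronecker

theorem sub_sq_le_add_mul_div_add_div {a b : ℝ} (ha : 0 < a) (hb : 0 < b) (x y : ℝ) :
    (x - y) ^ 2 ≤ (a + b) * (x ^ 2 / a + y ^ 2 / b) := by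
  have hdiff : (a + b) * (x ^ 2 / a + y ^ 2 / b) - (x - y) ^ 2
      = (b * x + a * y) ^ 2 / (a * b) := by
    field_simp; ring
  have : 0 ≤ (b * x + a * y) ^ 2 / (a * b) := by positivity
  linarith

section AndersonMorley

variable {ι : Type*} [Fintype ι] {w : ι → ι → ℝ}

theorem two_mul_sum_add_sum_le (hsymm : ∀ p q, w p q = w q p) (hnonneg : ∀ p q, 0 ≤ w p q)
    (hdiag : ∀ p, w p p = 0) {p q : ι} (hpq : p ≠ q) :
    2 * (∑ u, w p u + ∑ u, w q u) ≤ ∑ u, ∑ v, w u v + 2 * w p q := by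
  classical
  set g : ι → ℝ := fun u => ∑ v, w u v - (w u p + w u q)
  have hg : ∀ u, 0 ≤ g u := fun u => by
    have := sum_le_sum_of_subset_of_nonneg (subset_univ {p, q}) fun v _ _ => hnonneg u v
    rw [sum_pair hpq] at this
    exact sub_nonneg.mpr this
  have hpair := sum_le_sum_of_subset_of_nonneg (subset_univ {p, q}) fun u _ _ => hg u
  have hcol : ∀ v, ∑ u, w u v = ∑ u, w v u := fun v => sum_congr rfl fun u _ => hsymm u v
  simp only [g, sum_pair hpq, sum_sub_distrib, sum_add_distrib, hcol, hdiag] at hpair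
  rw [hsymm q p] at hpair
  linarith

theorem sum_sum_mul_sub_sq_le (hsymm : ∀ p q, w p q = w q p) (hnonneg : ∀ p q, 0 ≤ w p q)
    (hdiag : ∀ p, w p p = 0) {c : ℝ} (hc : ∀ p q, w p q ≤ c) (x : ι → ℝ) :
    ∑ p, ∑ q, w p q * (x p - x q) ^ 2 ≤ (∑ p, ∑ q, w p q + 2 * c) * ∑ p, x p ^ 2 := by
  rcases isEmpty_or_nonempty ι with _ | ⟨⟨p₀⟩⟩
  · simp
  set t : ι → ℝ := fun p => ∑ q, w p q
  set K := (∑ p, ∑ q, w p q + 2 * c) / 2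
  -- Cauchy–Schwarz on each edge, weighted by the degrees `t`; summed over `q`, the coefficients
  -- of `x p ^ 2 / t p` add up to `t p`.
  have hpair : ∀ p q,
      w p q * (x p - x q) ^ 2 ≤ K * (w p q * (x p ^ 2 / t p) + w p q * (x q ^ 2 / t q)) := by
    intro p q
    rcases (hnonneg p q).eq_or_lt with h0 | hpos
    · simp [← h0]
    have hpq : p ≠ q := fun h => by simp [h, hdiag] at hpos
    have htp : 0 < t p := hpos.trans_le (single_le_sum (fun v _ => hnonneg p v) (mem_univ q))
    have htq : 0 < t q :=
      (hsymm p q ▸ hpos).trans_le (single_le_sum (fun v _ => hnonneg q v) (mem_univ p))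
    have hK : t p + t q ≤ K := by
      have := two_mul_sum_add_sum_le hsymm hnonneg hdiag hpq
      have := hc p q
      simp only [K, t]; linarith
    calc w p q * (x p - x q) ^ 2 ≤ w p q * ((t p + t q) * (x p ^ 2 / t p + x q ^ 2 / t q)) :=
          mul_le_mul_of_nonneg_left (sub_sq_le_add_mul_div_add_div htp htq _ _) hpos.le
      _ ≤ w p q * (K * (x p ^ 2 / t p + x q ^ 2 / t q)) := by gcongr
      _ = _ := by ring
  have htnn : ∀ p, 0 ≤ t p := fun p => sum_nonneg fun q _ => hnonneg p q
  have hrow : ∀ p, t p * (x p ^ 2 / t p) ≤ x p ^ 2 := fun p => by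
    rcases (htnn p).eq_or_lt with h0 | hpos
    · rw [← h0, zero_mul]; positivity
    · exact (mul_div_cancel₀ _ hpos.ne').le
  have hcol : ∀ q, ∑ p, w p q = t q := fun q => sum_congr rfl fun p _ => hsymm p q
  have hK0 : 0 ≤ K := by
    have := sum_nonneg fun p (_ : p ∈ univ) => sum_nonneg fun q (_ : q ∈ univ) => hnonneg p q
    have := (hnonneg p₀ p₀).trans (hc p₀ p₀)
    simp only [K]; linarith
  calc ∑ p, ∑ q, w p q * (x p - x q) ^ 2
      ≤ ∑ p, ∑ q, K * (w p q * (x p ^ 2 / t p) + w p q * (x q ^ 2 / t q)) :=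
        sum_le_sum fun p _ => sum_le_sum fun q _ => hpair p q
    _ = K * (∑ p, t p * (x p ^ 2 / t p) + ∑ q, t q * (x q ^ 2 / t q)) := by
        simp only [← mul_sum, sum_add_distrib]
        rw [sum_comm (f := fun p q => w p q * (x q ^ 2 / t q))]
        simp only [← sum_mul, hcol]
        rfl
    _ ≤ K * (∑ p, x p ^ 2 + ∑ q, x q ^ 2) := by
        gcongr with p _ q _ <;> exact hrow _
    _ = _ := by ring

end AndersonMorley

namespace Matrix

variable {ι κ σ τ : Type*} [Fintype ι] [Fintype κ]

def frobeniusInner (X Y : Matrix ι κ ℝ) : ℝ := ∑ i, ∑ j, X i j * Y i j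

def frobeniusNormSq (X : Matrix ι κ ℝ) : ℝ := ∑ i, ∑ j, X i j ^ 2

theorem frobeniusInner_comm (X Y : Matrix ι κ ℝ) : frobeniusInner X Y = frobeniusInner Y X := by
  simp only [frobeniusInner, mul_comm]

theorem frobeniusInner_self (X : Matrix ι κ ℝ) : frobeniusInner X X = frobeniusNormSq X := by
  simp only [frobeniusInner, frobeniusNormSq, sq]

theorem frobeniusNormSq_nonneg (X : Matrix ι κ ℝ) : 0 ≤ frobeniusNormSq X := by
  unfold frobeniusNormSq; positivity

theorem frobeniusNormSq_add (X Y : Matrix ι κ ℝ) :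
    frobeniusNormSq (X + Y) = frobeniusNormSq X + 2 * frobeniusInner X Y + frobeniusNormSq Y := by
  simp only [frobeniusNormSq, frobeniusInner, add_apply, mul_sum, ← sum_add_distrib]
  congr! 2; ring

theorem frobeniusInner_eq_trace (X Y : Matrix ι κ ℝ) : frobeniusInner X Y = trace (Xᵀ * Y) := by
  rw [frobeniusInner, sum_comm]; rfl

theorem frobeniusInner_le_sqrt_mul_sqrt (X Y : Matrix ι κ ℝ) :
    frobeniusInner X Y ≤ √(frobeniusNormSq X) * √(frobeniusNormSq Y) := by
  simpa only [frobeniusInner, frobeniusNormSq, ← Fintype.sum_prod_type'] using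
    Real.sum_mul_le_sqrt_mul_sqrt univ (fun p : ι × κ => X p.1 p.2) (fun p => Y p.1 p.2)

theorem frobeniusInner_sum_smul_sum_smul (s : Finset σ) (t : Finset τ)
    (c : σ → ℝ) (d : τ → ℝ) (X : σ → Matrix ι κ ℝ) (Y : τ → Matrix ι κ ℝ) :
    frobeniusInner (∑ a ∈ s, c a • X a) (∑ b ∈ t, d b • Y b)
      = ∑ a ∈ s, ∑ b ∈ t, c a * d b * frobeniusInner (X a) (Y b) := by
  simp only [frobeniusInner_eq_trace, transpose_sum, transpose_smul, Matrix.sum_mul,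
    Matrix.mul_sum, Matrix.smul_mul, Matrix.mul_smul, trace_sum, trace_smul, smul_eq_mul,
    Finset.mul_sum]
  rw [sum_comm]
  exact sum_congr rfl fun _ _ => sum_congr rfl fun _ _ => by ring

theorem frobeniusInner_conj [DecidableEq κ] {U : Matrix κ κ ℝ} (hU : Uᵀ * U = 1)
    (X Y : Matrix κ κ ℝ) :
    frobeniusInner (U * X * Uᵀ) (U * Y * Uᵀ) = frobeniusInner X Y := by
  simp only [frobeniusInner_eq_trace, transpose_mul, transpose_transpose]
  calc trace (U * (Xᵀ * Uᵀ) * (U * Y * Uᵀ)) = trace (U * (Xᵀ * (Uᵀ * U) * Y) * Uᵀ) := by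
        simp only [Matrix.mul_assoc]
    _ = trace (Xᵀ * Y) := by rw [hU, Matrix.mul_one, trace_mul_cycle, hU, Matrix.one_mul]

theorem frobeniusNormSq_conj [DecidableEq κ] {U : Matrix κ κ ℝ} (hU : Uᵀ * U = 1)
    (X : Matrix κ κ ℝ) :
    frobeniusNormSq (U * X * Uᵀ) = frobeniusNormSq X := by
  rw [← frobeniusInner_self, ← frobeniusInner_self, frobeniusInner_conj hU]

theorem sum_frobeniusNormSq_sum_smul [Fintype σ] [DecidableEq σ] {P : Matrix σ σ ℝ}
    (hP : Pᵀ * P = 1) (v : σ → Matrix ι κ ℝ) :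
    ∑ r, frobeniusNormSq (∑ a, P r a • v a) = ∑ a, frobeniusNormSq (v a) := by
  have hcol : ∀ a b, ∑ r, P r a * P r b = (1 : Matrix σ σ ℝ) a b := fun a b => by
    rw [← hP]; rfl
  simp only [← frobeniusInner_self, frobeniusInner_sum_smul_sum_smul]
  rw [sum_comm]
  refine sum_congr rfl fun a _ => ?_
  rw [sum_comm]
  simp only [← sum_mul, hcol, one_apply, ite_mul, one_mul, zero_mul, sum_ite_eq, mem_univ, if_true]

theorem IsSymm.exists_diagonalization [DecidableEq κ] {A : Matrix κ κ ℝ} (hA : A.IsSymm) :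
    ∃ (U : Matrix κ κ ℝ) (d : κ → ℝ), Uᵀ * U = 1 ∧ U * Uᵀ = 1 ∧ A = U * diagonal d * Uᵀ := by
  have hA' : A.IsHermitian := by
    rwa [IsHermitian, conjTranspose_eq_transpose_of_trivial]
  refine ⟨hA'.eigenvectorUnitary, hA'.eigenvalues, ?_, ?_, ?_⟩
  · simpa [star_eq_conjTranspose] using (mem_unitaryGroup_iff').mp hA'.eigenvectorUnitary.2
  · simpa [star_eq_conjTranspose] using (mem_unitaryGroup_iff).mp hA'.eigenvectorUnitary.2
  · simpa [star_eq_conjTranspose, Unitary.conjStarAlgAut_apply] using hA'.spectral_theorem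

theorem frobeniusNormSq_sum_smul {s : Finset σ} {Z : σ → Matrix ι κ ℝ}
    (horth : (s : Set σ).Pairwise fun a b => frobeniusInner (Z a) (Z b) = 0) (c : σ → ℝ) :
    frobeniusNormSq (∑ a ∈ s, c a • Z a) = ∑ a ∈ s, c a ^ 2 * frobeniusNormSq (Z a) := by
  rw [← frobeniusInner_self, frobeniusInner_sum_smul_sum_smul]
  refine sum_congr rfl fun a ha => ?_
  rw [sum_eq_single_of_mem a ha fun b hb hba => by rw [horth ha hb hba.symm, mul_zero],
    frobeniusInner_self, sq]

theorem sq_apply_add_sq_apply_le [DecidableEq ι] (X : Matrix ι ι ℝ) {i j : ι} (hij : i ≠ j) :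
    X i j ^ 2 + X j i ^ 2 ≤ frobeniusNormSq X := by
  have hrows := sum_le_sum_of_subset_of_nonneg (subset_univ {i, j})
    fun u _ _ => sum_nonneg fun v (_ : v ∈ univ) => sq_nonneg (X u v)
  rw [sum_pair hij] at hrows
  have hi := single_le_sum (fun v _ => sq_nonneg (X i v)) (mem_univ j)
  have hj := single_le_sum (fun v _ => sq_nonneg (X j v)) (mem_univ i)
  rw [frobeniusNormSq]
  linarith

theorem two_mul_sum_sq_apply_le [DecidableEq ι] {s : Finset σ} {Z : σ → Matrix ι ι ℝ}
    (hZ : ∀ a ∈ s, (Z a).IsSymm)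
    (horth : (s : Set σ).Pairwise fun a b => frobeniusInner (Z a) (Z b) = 0)
    {M : ℝ} (hM0 : 0 ≤ M) (hM : ∀ a ∈ s, frobeniusNormSq (Z a) ≤ M) {i j : ι} (hij : i ≠ j) :
    2 * ∑ a ∈ s, Z a i j ^ 2 ≤ M := by
  set w := ∑ a ∈ s, Z a i j ^ 2
  set X := ∑ a ∈ s, Z a i j • Z a
  have hXij : X i j = w := by simp [X, w, Matrix.sum_apply, sq]
  have hXji : X j i = w := by
    simp only [X, w, Matrix.sum_apply, smul_apply, smul_eq_mul, sq]
    exact sum_congr rfl fun a ha => by rw [(hZ a ha).apply j i]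
  have hupper : frobeniusNormSq X ≤ M * w := by
    rw [frobeniusNormSq_sum_smul horth, mul_sum]
    exact sum_le_sum fun a ha => by
      rw [mul_comm M]; exact mul_le_mul_of_nonneg_left (hM a ha) (sq_nonneg _)
  have hlower := sq_apply_add_sq_apply_le X hij
  rw [hXij, hXji] at hlower
  have hw : 0 ≤ w := sum_nonneg fun a _ => sq_nonneg _
  nlinarith

theorem frobeniusNormSq_lie_diagonal [DecidableEq ι] (Z : Matrix ι ι ℝ) (x : ι → ℝ) :
    frobeniusNormSq ⁅Z, diagonal x⁆ = ∑ i, ∑ j, Z i j ^ 2 * (x i - x j) ^ 2 := by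
  simp only [frobeniusNormSq, Ring.lie_def, sub_apply, mul_diagonal, diagonal_mul]
  exact sum_congr rfl fun i _ => sum_congr rfl fun j _ => by ring

theorem sum_frobeniusNormSq_lie_diagonal_le [DecidableEq ι] {s : Finset σ}
    {Z : σ → Matrix ι ι ℝ} (hZ : ∀ a ∈ s, (Z a).IsSymm)
    (horth : (s : Set σ).Pairwise fun a b => frobeniusInner (Z a) (Z b) = 0)
    {M : ℝ} (hM0 : 0 ≤ M) (hM : ∀ a ∈ s, frobeniusNormSq (Z a) ≤ M) (x : ι → ℝ) :
    ∑ a ∈ s, frobeniusNormSq ⁅Z a, diagonal x⁆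
      ≤ (∑ i, x i ^ 2) * (∑ a ∈ s, frobeniusNormSq (Z a) + M) := by
  set w : ι → ι → ℝ := fun i j => if i = j then 0 else ∑ a ∈ s, Z a i j ^ 2
  have hw_nonneg : ∀ i j, 0 ≤ w i j := fun i j => by
    unfold w; split_ifs
    exacts [le_rfl, sum_nonneg fun a _ => sq_nonneg _]
  have hw_symm : ∀ i j, w i j = w j i := fun i j => by
    by_cases hij : i = j
    · rw [hij]
    · simp only [w, if_neg hij, if_neg (Ne.symm hij)]
      exact sum_congr rfl fun a ha => by rw [(hZ a ha).apply i j]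
  have hw_le : ∀ i j, w i j ≤ M / 2 := fun i j => by
    by_cases hij : i = j
    · simp only [w, if_pos hij]; linarith
    · simp only [w, if_neg hij]; linarith [two_mul_sum_sq_apply_le hZ horth hM0 hM hij]
  have hw_total : ∑ i, ∑ j, w i j ≤ ∑ a ∈ s, frobeniusNormSq (Z a) := by
    calc ∑ i, ∑ j, w i j ≤ ∑ i, ∑ j, ∑ a ∈ s, Z a i j ^ 2 :=
          sum_le_sum fun i _ => sum_le_sum fun j _ => by
            unfold w; split_ifs
            exacts [sum_nonneg fun a _ => sq_nonneg _, le_rfl]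
      _ = ∑ i, ∑ a ∈ s, ∑ j, Z a i j ^ 2 := sum_congr rfl fun i _ => sum_comm
      _ = _ := sum_comm
  have hlhs :
      ∑ a ∈ s, frobeniusNormSq ⁅Z a, diagonal x⁆ = ∑ i, ∑ j, w i j * (x i - x j) ^ 2 := by
    calc ∑ a ∈ s, frobeniusNormSq ⁅Z a, diagonal x⁆
        = ∑ i, ∑ a ∈ s, ∑ j, Z a i j ^ 2 * (x i - x j) ^ 2 := by
          simp only [frobeniusNormSq_lie_diagonal]; exact sum_comm
      _ = ∑ i, ∑ j, (∑ a ∈ s, Z a i j ^ 2) * (x i - x j) ^ 2 := by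
          simp only [sum_mul]; exact sum_congr rfl fun i _ => sum_comm
      _ = _ := sum_congr rfl fun i _ => sum_congr rfl fun j _ => by
          by_cases hij : i = j
          · simp [hij]
          · simp only [w, if_neg hij]
  rw [hlhs]
  calc _ ≤ (∑ i, ∑ j, w i j + 2 * (M / 2)) * ∑ i, x i ^ 2 :=
        sum_sum_mul_sub_sq_le hw_symm hw_nonneg (fun i => if_pos rfl) hw_le x
    _ ≤ _ := by rw [mul_comm]; gcongr; linarith

theorem frobeniusNormSq_diagonal [DecidableEq ι] (x : ι → ℝ) :
    frobeniusNormSq (diagonal x) = ∑ i, x i ^ 2 := by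
  refine sum_congr rfl fun i _ => ?_
  rw [sum_eq_single i (fun j _ hji => by simp [diagonal_apply_ne' x hji]) (by simp)]
  simp

theorem lie_conj [DecidableEq ι] {U : Matrix ι ι ℝ} (hU : Uᵀ * U = 1) (X Y : Matrix ι ι ℝ) :
    ⁅U * X * Uᵀ, U * Y * Uᵀ⁆ = U * ⁅X, Y⁆ * Uᵀ := by
  simp only [Ring.lie_def, Matrix.mul_sub, Matrix.sub_mul]
  congr 1 <;> simp only [Matrix.mul_assoc, ← Matrix.mul_assoc Uᵀ U, hU, Matrix.one_mul]

theorem IsSymm.conj {X : Matrix ι ι ℝ} (hX : X.IsSymm) (U : Matrix ι ι ℝ) :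
    (U * X * Uᵀ).IsSymm := by
  simp only [IsSymm, transpose_mul, transpose_transpose, hX.eq, Matrix.mul_assoc]

theorem sum_frobeniusNormSq_lie_le [DecidableEq ι] {s : Finset σ} {Y : σ → Matrix ι ι ℝ}
    (hY : ∀ a ∈ s, (Y a).IsSymm)
    (horth : (s : Set σ).Pairwise fun a b => frobeniusInner (Y a) (Y b) = 0)
    {M : ℝ} (hM0 : 0 ≤ M) (hM : ∀ a ∈ s, frobeniusNormSq (Y a) ≤ M)
    {W : Matrix ι ι ℝ} (hW : W.IsSymm) :
    ∑ a ∈ s, frobeniusNormSq ⁅Y a, W⁆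
      ≤ frobeniusNormSq W * (∑ a ∈ s, frobeniusNormSq (Y a) + M) := by
  obtain ⟨U, x, hU, hU', rfl⟩ := hW.exists_diagonalization
  have hUt : Uᵀᵀ * Uᵀ = 1 := by rwa [transpose_transpose]
  set Z : σ → Matrix ι ι ℝ := fun a => Uᵀ * Y a * Uᵀᵀ
  have hYZ : ∀ a, Y a = U * Z a * Uᵀ := fun a => by
    simp only [Z, transpose_transpose, ← Matrix.mul_assoc, hU', Matrix.one_mul]
    simp only [Matrix.mul_assoc, hU', Matrix.mul_one]
  have hnorm : ∀ a, frobeniusNormSq (Z a) = frobeniusNormSq (Y a) := fun a =>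
    frobeniusNormSq_conj hUt (Y a)
  have hdiag := sum_frobeniusNormSq_lie_diagonal_le (Z := Z) (fun a ha => (hY a ha).conj Uᵀ)
    (fun a ha b hb hab => by simp only [Z, frobeniusInner_conj hUt, horth ha hb hab])
    hM0 (fun a ha => (hnorm a).trans_le (hM a ha)) x
  simpa only [hYZ, lie_conj hU, frobeniusNormSq_conj hU, frobeniusNormSq_diagonal] using hdiag

theorem frobeniusNormSq_lie_comm (X Y : Matrix ι ι ℝ) :
    frobeniusNormSq ⁅X, Y⁆ = frobeniusNormSq ⁅Y, X⁆ := by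
  simp only [frobeniusNormSq, Ring.lie_def, sub_apply]
  exact sum_congr rfl fun i _ => sum_congr rfl fun j _ => by ring

theorem sum_sum_frobeniusInner_sq_add_sum_sum_frobeniusNormSq_lie_le_of_pairwise
    [DecidableEq ι] [DecidableEq κ] {B : κ → Matrix ι ι ℝ} (hB : ∀ r, (B r).IsSymm)
    (horth : Pairwise fun r s => frobeniusInner (B r) (B s) = 0) :
    ∑ r, ∑ s, frobeniusInner (B r) (B s) ^ 2 + ∑ r, ∑ s, frobeniusNormSq ⁅B r, B s⁆
      ≤ 3 / 2 * (∑ r, frobeniusNormSq (B r)) ^ 2 := by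
  rcases isEmpty_or_nonempty κ with _ | _
  · simp
  set S := ∑ r, frobeniusNormSq (B r)
  obtain ⟨r₀, -, hr₀⟩ := exists_max_image univ (fun r => frobeniusNormSq (B r)) univ_nonempty
  set a := frobeniusNormSq (B r₀)
  set M : κ → ℝ := fun r => if r = r₀ then S - a else a
  have hS_erase : ∀ r, ∑ s ∈ univ.erase r, frobeniusNormSq (B s) = S - frobeniusNormSq (B r) :=
    fun r => sum_erase_eq_sub (mem_univ r)
  have hT : ∑ r, ∑ s, frobeniusInner (B r) (B s) ^ 2 = ∑ r, frobeniusNormSq (B r) ^ 2 :=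
    sum_congr rfl fun r _ => by
      rw [sum_eq_single r (fun s _ hsr => by rw [horth hsr.symm, sq, zero_mul]) (by simp),
        frobeniusInner_self]
  have hQ : ∑ r, ∑ s, frobeniusNormSq ⁅B r, B s⁆
      = ∑ r, ∑ s ∈ univ.erase r, frobeniusNormSq ⁅B s, B r⁆ :=
    sum_congr rfl fun r _ => by
      rw [← add_sum_erase _ _ (mem_univ r), Ring.lie_def, sub_self,
        show frobeniusNormSq (0 : Matrix ι ι ℝ) = 0 by simp [frobeniusNormSq], zero_add]
      exact sum_congr rfl fun s _ => frobeniusNormSq_lie_comm _ _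
  have hstar : ∀ r, ∑ s ∈ univ.erase r, frobeniusNormSq ⁅B s, B r⁆
      ≤ frobeniusNormSq (B r) * (S - frobeniusNormSq (B r) + M r) := by
    intro r
    rw [← hS_erase]
    refine sum_frobeniusNormSq_lie_le (fun s _ => hB s) (horth.set_pairwise _) ?_ ?_ (hB r)
    · unfold M; split_ifs
      exacts [hS_erase r₀ ▸ sum_nonneg fun s _ => frobeniusNormSq_nonneg _,
        frobeniusNormSq_nonneg _]
    · intro s hs
      unfold M; split_ifs with hr
      · subst hr
        exact hS_erase r ▸ single_le_sum (fun s _ => frobeniusNormSq_nonneg (B s)) hs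
      · exact hr₀ s (mem_univ s)
  -- `2 a (S - a) ≤ S² / 2` is where the constant `3 / 2` comes from.
  have hM : ∑ r, frobeniusNormSq (B r) * M r = 2 * a * (S - a) := by
    rw [← add_sum_erase _ _ (mem_univ r₀),
      sum_congr rfl fun r hr => by rw [show M r = a from if_neg (ne_of_mem_erase hr)],
      ← sum_mul, hS_erase, show M r₀ = S - a from if_pos rfl]
    ring
  have hQ_le := (sum_le_sum fun r (_ : r ∈ univ) => hstar r).trans_eq
    (show ∑ r, frobeniusNormSq (B r) * (S - frobeniusNormSq (B r) + M r)
      = S ^ 2 - ∑ r, frobeniusNormSq (B r) ^ 2 + 2 * a * (S - a) by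
        simp only [mul_add, sum_add_distrib, hM, mul_sub, sum_sub_distrib, ← sum_mul, ← sq]
        ring)
  rw [hT, hQ]
  nlinarith [sq_nonneg (S - 2 * a)]

theorem mul_mul_transpose_apply (P G : Matrix κ κ ℝ) (r s : κ) :
    (P * G * Pᵀ) r s = ∑ α, ∑ β, P r α * P s β * G α β := by
  simp only [mul_apply, transpose_apply, sum_mul]
  rw [sum_comm]
  exact sum_congr rfl fun _ _ => sum_congr rfl fun _ _ => by ring

theorem lie_sum_smul_sum_smul (c d : κ → ℝ) (A : κ → Matrix ι ι ℝ) :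
    ⁅∑ α, c α • A α, ∑ β, d β • A β⁆ = ∑ α, ∑ β, (c α * d β) • ⁅A α, A β⁆ := by
  rw [Ring.lie_def, sum_mul_sum, sum_mul_sum,
    sum_comm (f := fun β α => d β • A β * (c α • A α)), ← sum_sub_distrib]
  refine sum_congr rfl fun α _ => ?_
  rw [← sum_sub_distrib]
  refine sum_congr rfl fun β _ => ?_
  rw [smul_mul_smul_comm, smul_mul_smul_comm, mul_comm (d β), ← smul_sub, Ring.lie_def]

theorem sum_sum_frobeniusInner_sq_add_sum_sum_frobeniusNormSq_lie_le
    [DecidableEq ι] [DecidableEq κ] {A : κ → Matrix ι ι ℝ} (hA : ∀ α, (A α).IsSymm) :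
    ∑ α, ∑ β, frobeniusInner (A α) (A β) ^ 2 + ∑ α, ∑ β, frobeniusNormSq ⁅A α, A β⁆
      ≤ 3 / 2 * (∑ α, frobeniusNormSq (A α)) ^ 2 := by
  set G : Matrix κ κ ℝ := of fun α β => frobeniusInner (A α) (A β)
  have hG : G.IsSymm := ext fun α β => frobeniusInner_comm _ _
  obtain ⟨U, d, hU, hU', hGU⟩ := hG.exists_diagonalization
  have hP : Uᵀᵀ * Uᵀ = 1 := by rwa [transpose_transpose]
  have hPGP : Uᵀ * G * Uᵀᵀ = diagonal d := by
    simp only [hGU, transpose_transpose, ← Matrix.mul_assoc, hU, Matrix.one_mul]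
    simp only [Matrix.mul_assoc, hU, Matrix.mul_one]
  set B : κ → Matrix ι ι ℝ := fun r => ∑ α, Uᵀ r α • A α
  have hB_inner : ∀ r s, frobeniusInner (B r) (B s) = (Uᵀ * G * Uᵀᵀ) r s := fun r s => by
    rw [frobeniusInner_sum_smul_sum_smul, mul_mul_transpose_apply]; rfl
  have hB_symm : ∀ r, (B r).IsSymm := fun r => by
    simp only [B, IsSymm, transpose_sum, transpose_smul, (hA _).eq]
  have hB_orth : Pairwise fun r s => frobeniusInner (B r) (B s) = 0 := fun r s hrs =>
    (hB_inner r s).trans (by rw [hPGP, diagonal_apply_ne d hrs])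
  have hS : ∑ r, frobeniusNormSq (B r) = ∑ α, frobeniusNormSq (A α) :=
    sum_frobeniusNormSq_sum_smul hP A
  have hT :
      ∑ r, ∑ s, frobeniusInner (B r) (B s) ^ 2 = ∑ α, ∑ β, frobeniusInner (A α) (A β) ^ 2 := by
    simp only [hB_inner]
    exact frobeniusNormSq_conj hP G
  -- The bracket is bilinear, so the pairs `(A α, A β)` are rotated by `Uᵀ ⊗ₖ Uᵀ`.
  have hQ : ∑ r, ∑ s, frobeniusNormSq ⁅B r, B s⁆ = ∑ α, ∑ β, frobeniusNormSq ⁅A α, A β⁆ := by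
    have hPP : (Uᵀ ⊗ₖ Uᵀ)ᵀ * (Uᵀ ⊗ₖ Uᵀ) = 1 := by
      rw [← kroneckerMap_transpose, ← mul_kronecker_mul, hP, one_kronecker_one]
    have := sum_frobeniusNormSq_sum_smul hPP fun p => ⁅A p.1, A p.2⁆
    simp only [Fintype.sum_prod_type, kroneckerMap_apply] at this
    simpa only [B, lie_sum_smul_sum_smul] using this
  rw [← hS, ← hT, ← hQ]
  exact sum_sum_frobeniusInner_sq_add_sum_sum_frobeniusNormSq_lie_le_of_pairwise
    hB_symm hB_orth

theorem IsSymm.trace_mul {X : Matrix ι ι ℝ} (hX : X.IsSymm) (Y : Matrix ι ι ℝ) :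
    trace (X * Y) = frobeniusInner X Y := by
  rw [frobeniusInner_eq_trace, hX.eq]

theorem sum_sum_frobeniusInner_le [Fintype σ] [Fintype τ]
    (X Y : σ → τ → Matrix ι κ ℝ) :
    ∑ a, ∑ b, frobeniusInner (X a b) (Y a b)
      ≤ √(∑ a, ∑ b, frobeniusNormSq (X a b)) * √(∑ a, ∑ b, frobeniusNormSq (Y a b)) :=
  calc ∑ a, ∑ b, frobeniusInner (X a b) (Y a b)
      ≤ ∑ a, ∑ b, √(frobeniusNormSq (X a b)) * √(frobeniusNormSq (Y a b)) :=
        sum_le_sum fun _ _ => sum_le_sum fun _ _ => frobeniusInner_le_sqrt_mul_sqrt _ _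
    _ ≤ ∑ a, √(∑ b, frobeniusNormSq (X a b)) * √(∑ b, frobeniusNormSq (Y a b)) :=
        sum_le_sum fun _ _ => Real.sum_sqrt_mul_sqrt_le _
          (fun _ => frobeniusNormSq_nonneg _) (fun _ => frobeniusNormSq_nonneg _)
    _ ≤ _ := Real.sum_sqrt_mul_sqrt_le _
          (fun _ => sum_nonneg fun _ _ => frobeniusNormSq_nonneg _)
          (fun _ => sum_nonneg fun _ _ => frobeniusNormSq_nonneg _)

end Matrix

theorem stmt_16_general {n m : ℕ}
    (A : Fin m → Matrix (Fin n) (Fin n) ℝ) (hA : ∀ α, (A α).IsSymm)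
    (B : Fin m → Fin m → Matrix (Fin n) (Fin n) ℝ) :
    (∑ α, ∑ β, (Matrix.trace (A α * A β)) ^ 2)
      + ∑ α, ∑ β, ∑ i, ∑ j, ((B α β + (A α * A β - A β * A α)) i j) ^ 2
      ≤ (3 / 2) * (∑ α, ∑ i, ∑ j, (A α i j) ^ 2) ^ 2
        + (∑ α, ∑ β, ∑ i, ∑ j, (B α β i j) ^ 2)
        + 4 * Real.sqrt (∑ α, ∑ β, ∑ i, ∑ j, (B α β i j) ^ 2)
            * (∑ α, ∑ i, ∑ j, (A α i j) ^ 2) := by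
  set S := ∑ α, frobeniusNormSq (A α)
  set T := ∑ α, ∑ β, frobeniusInner (A α) (A β) ^ 2
  set Q := ∑ α, ∑ β, frobeniusNormSq ⁅A α, A β⁆
  set b := ∑ α, ∑ β, frobeniusNormSq (B α β)
  have hLiLi : T + Q ≤ 3 / 2 * S ^ 2 :=
    sum_sum_frobeniusInner_sq_add_sum_sum_frobeniusNormSq_lie_le hA
  have hS : 0 ≤ S := sum_nonneg fun α _ => frobeniusNormSq_nonneg _
  have hT : 0 ≤ T := sum_nonneg fun α _ => sum_nonneg fun β _ => sq_nonneg _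
  have hsqrtQ : √Q ≤ 2 * S := Real.sqrt_le_iff.mpr ⟨by positivity, by nlinarith⟩
  have hcross := (sum_sum_frobeniusInner_le B fun α β => ⁅A α, A β⁆).trans
    (mul_le_mul_of_nonneg_left hsqrtQ (Real.sqrt_nonneg b))
  have hexpand : ∑ α, ∑ β, frobeniusNormSq (B α β + ⁅A α, A β⁆)
      = b + 2 * ∑ α, ∑ β, frobeniusInner (B α β) ⁅A α, A β⁆ + Q := by
    simp only [frobeniusNormSq_add, sum_add_distrib, mul_sum]
    rfl
  simp only [(hA _).trace_mul]
  change T + ∑ α, ∑ β, frobeniusNormSq (B α β + ⁅A α, A β⁆) ≤ 3 / 2 * S ^ 2 + b + 4 * √b * S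
  linarith

/-- Pointwise algebraic content of inequality (4.6) of Lemma 4.1: for symmetric
matrices `A_α` and arbitrary matrices `B_{αβ}`,
`∑_{α,β} (tr(A_α A_β))² + ∑_{α,β} ‖B_{αβ} + [A_α, A_β]‖_F²
  ≤ (3/2)S² + ‖B‖² + 4‖B‖·S`,
where `S = ∑_α ‖A_α‖_F²` and `‖B‖² = ∑_{α,β} ‖B_{αβ}‖_F²`. -/
theorem stmt_16 {n m : ℕ} (hn : 1 ≤ n) (hm : 1 ≤ m)
    (A : Fin m → Matrix (Fin n) (Fin n) ℝ) (hA : ∀ α, (A α).IsSymm)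
    (B : Fin m → Fin m → Matrix (Fin n) (Fin n) ℝ) :
    (∑ α, ∑ β, (Matrix.trace (A α * A β)) ^ 2)
      + ∑ α, ∑ β, ∑ i, ∑ j, ((B α β + (A α * A β - A β * A α)) i j) ^ 2
      ≤ (3 / 2) * (∑ α, ∑ i, ∑ j, (A α i j) ^ 2) ^ 2
        + (∑ α, ∑ β, ∑ i, ∑ j, (B α β i j) ^ 2)
        + 4 * Real.sqrt (∑ α, ∑ β, ∑ i, ∑ j, (B α β i j) ^ 2)
            * (∑ α, ∑ i, ∑ j, (A α i j) ^ 2) :=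
  stmt_16_general A hA B
end
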